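/- Let m, q, p, n be natural numbers, H ∈ ℝ^{n×n} a symmetric positive semidefinite matrix, D ∈ ℝ^{m×m} and E ∈ ℝ^{p×p} symmetric negative definite matrices, G ∈ ℝ^{m×n}, Φ ∈ ℝ^{p×n}, and A ∈ ℝ^{q×n} of full row rank. Assume the only x ∈ ℝⁿ with Hx = 0, Gx = 0 and Φx = 0 is x = 0, and set R = H − Gᵀ D⁻¹ G − Φᵀ E⁻¹ Φ. Then the block matrix J = [[D, 0, 0, −G], [0, 0, 0, A], [0, 0, E, −Φ], [−Gᵀ, Aᵀ, −Φᵀ, H]] is invertible, and the q × q submatrix of J⁻¹ consisting of the rows and columns indexed by the second block equals −(A R⁻¹ Aᵀ)⁻¹; in particular this submatrix is negative definite. -/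

import Mathlib

/-!
Moving the second block row and column to the end turns `J` into the saddle-point matrix
`[[K, Bᵀ], [B, 0]]` with `B = [0 A]` and `K = [[diag(D, E), -[G; Φ]], [-[Gᵀ Φᵀ], H]]`.
The Schur complement of `diag(D, E)` in `K` is `R = H + Gᵀ(-D)⁻¹G + Φᵀ(-E)⁻¹Φ`, a sum of positive
semidefinite matrices whose kernel is `ker H ∩ ker G ∩ ker Φ = 0`; hence `K` is invertible and
the last diagonal block of `K⁻¹` is `R⁻¹`. The Schur complement of `K` in the saddle-point matrix
is therefore `-B K⁻¹ Bᵀ = -A R⁻¹ Aᵀ`, which is negative definite because `Aᵀ` is injective, and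
its inverse is the last diagonal block of the inverse of the saddle-point matrix.
-/

open Matrix

namespace Matrix

section PosSemidef

open scoped ComplexOrder

variable {𝕜 n k l : Type*} [RCLike 𝕜] [Fintype n] [Fintype k] [Fintype l]

theorem PosSemidef.add_mulVec_eq_zero_iff {M N : Matrix n n 𝕜} (hM : M.PosSemidef)
    (hN : N.PosSemidef) (x : n → 𝕜) : (M + N) *ᵥ x = 0 ↔ M *ᵥ x = 0 ∧ N *ᵥ x = 0 := by
  refine ⟨fun h => ?_, fun ⟨hMx, hNx⟩ => by rw [add_mulVec, hMx, hNx, add_zero]⟩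
  rw [← (hM.add hN).dotProduct_mulVec_zero_iff, add_mulVec, dotProduct_add,
    add_eq_zero_iff_of_nonneg (hM.dotProduct_mulVec_nonneg x) (hN.dotProduct_mulVec_nonneg x),
    hM.dotProduct_mulVec_zero_iff, hN.dotProduct_mulVec_zero_iff] at h
  exact h

theorem PosDef.conjTranspose_mul_mul_mulVec_eq_zero_iff [DecidableEq k] {N : Matrix k k 𝕜}
    (hN : N.PosDef) (B : Matrix k n 𝕜) (x : n → 𝕜) : (Bᴴ * N * B) *ᵥ x = 0 ↔ B *ᵥ x = 0 := by
  rw [← (hN.posSemidef.conjTranspose_mul_mul_same B).dotProduct_mulVec_zero_iff,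
    ← mulVec_mulVec, ← mulVec_mulVec, dotProduct_mulVec, ← star_mulVec,
    hN.posSemidef.dotProduct_mulVec_zero_iff, (mulVec_injective_iff_isUnit.2 hN.isUnit).eq_iff'
    (mulVec_zero N)]

theorem posDef_add_conjTranspose_mul_mul_add [DecidableEq n] [DecidableEq k] [DecidableEq l]
    {H : Matrix n n 𝕜} (hH : H.PosSemidef) {N₁ : Matrix k k 𝕜} (hN₁ : N₁.PosDef)
    {N₂ : Matrix l l 𝕜} (hN₂ : N₂.PosDef) {B₁ : Matrix k n 𝕜} {B₂ : Matrix l n 𝕜}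
    (hker : ∀ x, H *ᵥ x = 0 → B₁ *ᵥ x = 0 → B₂ *ᵥ x = 0 → x = 0) :
    (H + B₁ᴴ * N₁ * B₁ + B₂ᴴ * N₂ * B₂).PosDef := by
  have h₁ := hN₁.posSemidef.conjTranspose_mul_mul_same B₁
  have h₂ := hN₂.posSemidef.conjTranspose_mul_mul_same B₂
  refine ((hH.add h₁).add h₂).posDef_iff_isUnit.2 (mulVec_injective_iff_isUnit.1 ?_)
  refine (injective_iff_map_eq_zero (mulVecLin _)).2 fun x hx => ?_
  rw [mulVecLin_apply, ((hH.add h₁).add_mulVec_eq_zero_iff h₂ x),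
    hH.add_mulVec_eq_zero_iff h₁, hN₁.conjTranspose_mul_mul_mulVec_eq_zero_iff,
    hN₂.conjTranspose_mul_mul_mulVec_eq_zero_iff] at hx
  exact hker x hx.1.1 hx.1.2 hx.2

end PosSemidef

theorem vecMul_injective_of_rank_eq_card {K m n : Type*} [Field K] [Fintype m] [Fintype n]
    {A : Matrix m n K} (hA : A.rank = Fintype.card m) : Function.Injective A.vecMul :=
  vecMul_injective_iff.2 <| linearIndependent_iff_card_eq_finrank_span.2 <| by
    rw [Set.finrank, ← rank_eq_finrank_span_row, hA]

section Block

variable {α m n : Type*} [CommRing α] [Fintype m] [Fintype n] [DecidableEq m] [DecidableEq n]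

protected theorem inv_neg (A : Matrix n n α) : (-A)⁻¹ = -A⁻¹ := by
  by_cases hA : IsUnit A
  · exact inv_eq_right_inv (by rw [neg_mul_neg, mul_nonsing_inv A ((isUnit_iff_isUnit_det A).1 hA)])
  · rw [nonsing_inv_eq_ringInverse, nonsing_inv_eq_ringInverse, Ring.inverse_non_unit _ hA,
      Ring.inverse_non_unit _ (by rwa [IsUnit.neg_iff]), neg_zero]

theorem isUnit_fromBlocks_of_isUnit₁₁ {A : Matrix m m α} {B : Matrix m n α} {C : Matrix n m α}
    {D : Matrix n n α} (hA : IsUnit A) (hS : IsUnit (D - C * A⁻¹ * B)) :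
    IsUnit (fromBlocks A B C D) := by
  let := hA.invertible
  rw [isUnit_fromBlocks_iff_of_invertible₁₁, invOf_eq_nonsing_inv]
  exact hS

theorem toBlocks₂₂_inv_fromBlocks_of_isUnit₁₁ {A : Matrix m m α} {B : Matrix m n α}
    {C : Matrix n m α} {D : Matrix n n α} (hA : IsUnit A) (hS : IsUnit (D - C * A⁻¹ * B)) :
    (fromBlocks A B C D)⁻¹.toBlocks₂₂ = (D - C * A⁻¹ * B)⁻¹ := by
  let := hA.invertible
  let : Invertible (D - C * ⅟A * B) := by rw [invOf_eq_nonsing_inv]; exact hS.invertible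
  let := fromBlocks₁₁Invertible A B C D
  rw [← invOf_eq_nonsing_inv, invOf_fromBlocks₁₁_eq, toBlocks_fromBlocks₂₂, invOf_eq_nonsing_inv,
    invOf_eq_nonsing_inv]

theorem isUnit_fromBlocks_zero₂₂_of_isUnit {K : Matrix m m α} {B : Matrix n m α}
    {C : Matrix m n α} (hK : IsUnit K) (hS : IsUnit (B * K⁻¹ * C)) :
    IsUnit (fromBlocks K C B 0) :=
  isUnit_fromBlocks_of_isUnit₁₁ hK (by rwa [zero_sub, IsUnit.neg_iff])

theorem toBlocks₂₂_inv_fromBlocks_zero₂₂ {K : Matrix m m α} {B : Matrix n m α}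
    {C : Matrix m n α} (hK : IsUnit K) (hS : IsUnit (B * K⁻¹ * C)) :
    (fromBlocks K C B 0)⁻¹.toBlocks₂₂ = -(B * K⁻¹ * C)⁻¹ := by
  rw [toBlocks₂₂_inv_fromBlocks_of_isUnit₁₁ hK (by rwa [zero_sub, IsUnit.neg_iff]), zero_sub,
    Matrix.inv_neg]

omit [Fintype n] [DecidableEq n] in
theorem fromCols_mul_inv_fromBlocks_zero_mul_fromRows {k l : Type*} [Fintype k] [Fintype l]
    [DecidableEq k] [DecidableEq l] (D : Matrix k k α) (E : Matrix l l α)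
    (hDE : IsUnit D ↔ IsUnit E) (C₁ : Matrix n k α) (C₂ : Matrix n l α) (B₁ : Matrix k n α)
    (B₂ : Matrix l n α) :
    fromCols C₁ C₂ * (fromBlocks D 0 0 E)⁻¹ * fromRows B₁ B₂ = C₁ * D⁻¹ * B₁ + C₂ * E⁻¹ * B₂ := by
  simp [inv_fromBlocks_zero₂₁_of_isUnit_iff D 0 E hDE, fromCols_mul_fromBlocks,
    fromCols_mul_fromRows]

omit [DecidableEq m] [DecidableEq n] in
theorem fromCols_zero_mul_mul_transpose {k : Type*} (A : Matrix k n α)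
    (M : Matrix (m ⊕ n) (m ⊕ n) α) :
    fromCols (0 : Matrix k m α) A * M * (fromCols (0 : Matrix k m α) A)ᵀ =
      A * M.toBlocks₂₂ * Aᵀ := by
  rw [← fromBlocks_toBlocks M, fromCols_mul_fromBlocks, transpose_fromCols, fromCols_mul_fromRows]
  simp

end Block

end Matrix

def kktReorder (m q p n : Type*) : (m ⊕ q) ⊕ (p ⊕ n) ≃ ((m ⊕ p) ⊕ n) ⊕ q :=
  (Equiv.sumSumSumComm m q p n).trans
    (((Equiv.refl _).sumCongr (Equiv.sumComm q n)).trans (Equiv.sumAssoc _ _ _).symm)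

theorem fromBlocks_kkt_eq_submatrix {α m q p n : Type*} [Zero α] [Neg α] (D : Matrix m m α)
    (E : Matrix p p α) (H : Matrix n n α) (G : Matrix m n α) (Φ : Matrix p n α)
    (A : Matrix q n α) :
    fromBlocks (fromBlocks D 0 0 0) (fromBlocks 0 (-G) 0 A) (fromBlocks 0 0 (-Gᵀ) Aᵀ)
        (fromBlocks E (-Φ) (-Φᵀ) H) =
      (fromBlocks (fromBlocks (fromBlocks D 0 0 E) (fromRows (-G) (-Φ)) (fromCols (-Gᵀ) (-Φᵀ)) H)
        (fromCols (0 : Matrix q (m ⊕ p) α) A)ᵀ (fromCols (0 : Matrix q (m ⊕ p) α) A) 0).submatrix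
        (kktReorder m q p n) (kktReorder m q p n) := by
  ext ((i | i) | (i | i)) ((j | j) | (j | j)) <;> rfl

/-- Central claim in the proof of the paper's Lemma 2: the KKT diagonal block
`J` is invertible, the (2,2) block of `J⁻¹` equals `−(A R⁻¹ Aᵀ)⁻¹`, and this
block is negative definite. -/
theorem kkt_inverse_second_block
    (m q p n : ℕ)
    (H : Matrix (Fin n) (Fin n) ℝ) (hH : H.PosSemidef)
    (D : Matrix (Fin m) (Fin m) ℝ) (hD : (-D).PosDef)
    (E : Matrix (Fin p) (Fin p) ℝ) (hE : (-E).PosDef)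
    (G : Matrix (Fin m) (Fin n) ℝ) (Φ : Matrix (Fin p) (Fin n) ℝ)
    (A : Matrix (Fin q) (Fin n) ℝ) (hA : A.rank = q)
    (hker : ∀ x : Fin n → ℝ,
      H.mulVec x = 0 → G.mulVec x = 0 → Φ.mulVec x = 0 → x = 0)
    (R : Matrix (Fin n) (Fin n) ℝ)
    (hR : R = H - Gᵀ * D⁻¹ * G - Φᵀ * E⁻¹ * Φ)
    (J : Matrix ((Fin m ⊕ Fin q) ⊕ (Fin p ⊕ Fin n))
               ((Fin m ⊕ Fin q) ⊕ (Fin p ⊕ Fin n)) ℝ)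
    (hJ : J = Matrix.fromBlocks
      (Matrix.fromBlocks D 0 0 0) (Matrix.fromBlocks 0 (-G) 0 A)
      (Matrix.fromBlocks 0 0 (-Gᵀ) Aᵀ) (Matrix.fromBlocks E (-Φ) (-Φᵀ) H)) :
    IsUnit J ∧
    J⁻¹.submatrix (fun i : Fin q => Sum.inl (Sum.inr i))
        (fun j : Fin q => Sum.inl (Sum.inr j)) = -(A * R⁻¹ * Aᵀ)⁻¹ ∧
    (-(J⁻¹.submatrix (fun i : Fin q => Sum.inl (Sum.inr i))
        (fun j : Fin q => Sum.inl (Sum.inr j)))).PosDef := by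
  have hDu : IsUnit D := by simpa using hD.isUnit.neg
  have hEu : IsUnit E := by simpa using hE.isUnit.neg
  have hDE : IsUnit (fromBlocks D 0 0 E) := isUnit_fromBlocks_zero₂₁.2 ⟨hDu, hEu⟩
  have hRpd : R.PosDef := by
    have hR' : R = H + Gᴴ * (-D)⁻¹ * G + Φᴴ * (-E)⁻¹ * Φ := by
      simp [hR, Matrix.inv_neg, conjTranspose_eq_transpose_of_trivial, sub_eq_add_neg]
    exact hR' ▸ posDef_add_conjTranspose_mul_mul_add hH hD.inv hE.inv hker
  have hSpd : (A * R⁻¹ * Aᵀ).PosDef := by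
    simpa [conjTranspose_eq_transpose_of_trivial] using
      hRpd.inv.mul_mul_conjTranspose_same (vecMul_injective_of_rank_eq_card (by simpa using hA))
  have hK_schur : H - fromCols (-Gᵀ) (-Φᵀ) * (fromBlocks D 0 0 E)⁻¹ * fromRows (-G) (-Φ) = R := by
    rw [fromCols_mul_inv_fromBlocks_zero_mul_fromRows _ _ (iff_of_true hDu hEu)]
    simp only [hR, Matrix.neg_mul, Matrix.mul_neg, neg_neg]
    abel
  set K := fromBlocks (fromBlocks D 0 0 E) (fromRows (-G) (-Φ)) (fromCols (-Gᵀ) (-Φᵀ)) H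
  set B := fromCols (0 : Matrix (Fin q) (Fin m ⊕ Fin p) ℝ) A
  have hKS : IsUnit (H - fromCols (-Gᵀ) (-Φᵀ) * (fromBlocks D 0 0 E)⁻¹ * fromRows (-G) (-Φ)) :=
    hK_schur ▸ hRpd.isUnit
  have hK : IsUnit K := isUnit_fromBlocks_of_isUnit₁₁ hDE hKS
  have hBKB : B * K⁻¹ * Bᵀ = A * R⁻¹ * Aᵀ := by
    rw [fromCols_zero_mul_mul_transpose, toBlocks₂₂_inv_fromBlocks_of_isUnit₁₁ hDE hKS, hK_schur]
  have hS : IsUnit (B * K⁻¹ * Bᵀ) := hBKB ▸ hSpd.isUnit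
  have hsub : J⁻¹.submatrix (fun i : Fin q => Sum.inl (Sum.inr i))
      (fun j : Fin q => Sum.inl (Sum.inr j)) = -(A * R⁻¹ * Aᵀ)⁻¹ := by
    rw [hJ, fromBlocks_kkt_eq_submatrix, inv_submatrix_equiv, ← hBKB,
      ← toBlocks₂₂_inv_fromBlocks_zero₂₂ hK hS]
    rfl
  refine ⟨?_, hsub, ?_⟩
  · rw [hJ, fromBlocks_kkt_eq_submatrix, isUnit_submatrix_equiv]
    exact isUnit_fromBlocks_zero₂₂_of_isUnit hK hS
  · rw [hsub, neg_neg]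
    exact hSpd.inv
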